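/- arXiv:math/0604484 — 9 statements merged into one kernel-verified Lean document; each statement's English description precedes it below -/
import Mathlib

section
/- Let V be a finite-dimensional complex vector space, b a symmetric bilinear form on V, and T : V → V a linear endomorphism that is b-symmetric, i.e. b(Tx, y) = b(x, Ty) for all x, y ∈ V. Then for any two distinct complex numbers λ ≠ μ, the generalized λ-eigenspace and the generalized μ-eigenspace of T are b-orthogonal: b(x, y) = 0 for every x with (T − λ·id)^N x = 0 for some N and every y with (T − μ·id)^M y = 0 for some M. -/
/-!
Every polynomial in `T` is again `b`-self-adjoint. Since `(X - λ)^N` and `(X - μ)^M` are coprime,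
Bézout gives `u (X - λ)^N + v (X - μ)^M = 1`, so `x = v(T) (T - μ)^M x` when `(T - λ)^N x = 0`,
and moving `(T - μ)^M` across `b` onto `y` kills `b x y`.
-/

open Polynomial

namespace LinearMap

variable {R M M₂ : Type*} [CommSemiring R] [AddCommMonoid M] [Module R M]
  [AddCommMonoid M₂] [Module R M₂] {B : M →ₗ[R] M →ₗ[R] M₂} {T : Module.End R M}

theorem IsAdjointPair.aeval (hT : IsAdjointPair B B T T) (p : R[X]) :
    IsAdjointPair B B (aeval T p) (aeval T p) := by
  induction p using Polynomial.induction_on' with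
  | add p q hp hq =>
    rw [map_add]
    exact hp.add hq
  | monomial n a =>
    intro x y
    have hpow : IsAdjointPair B B ⇑(T ^ n) ⇑(T ^ n) := by
      induction n with
      | zero => exact isAdjointPair_one
      | succ n ih =>
        have := ih.mul hT
        rwa [← pow_succ, ← pow_succ'] at this
    simp [aeval_monomial, Algebra.algebraMap_eq_smul_one, hpow x y]

theorem IsAdjointPair.apply_eq_zero_of_isCoprime (hT : IsAdjointPair B B T T) {p q : R[X]}
    (hpq : IsCoprime p q) {x y : M} (hx : Polynomial.aeval T p x = 0)
    (hy : Polynomial.aeval T q y = 0) :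
    B x y = 0 := by
  obtain ⟨u, v, huv⟩ := hpq
  have hx' : x = Polynomial.aeval T v (Polynomial.aeval T q x) := by
    calc x = Polynomial.aeval T (u * p + v * q) x := by simp [huv]
      _ = Polynomial.aeval T v (Polynomial.aeval T q x) := by simp [hx]
  rw [hx', ← Module.End.mul_apply, ← map_mul, mul_comm, map_mul, Module.End.mul_apply,
    hT.aeval, hy, map_zero]

end LinearMap

theorem generalized_eigenspaces_orthogonal_general
    {V : Type*} [AddCommGroup V] [Module ℂ V]
    (b : LinearMap.BilinForm ℂ V)
    (T : Module.End ℂ V) (hT : ∀ x y, b (T x) y = b x (T y))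
    (lam mu : ℂ) (hne : lam ≠ mu)
    (x y : V) (N M : ℕ)
    (hx : ((T - lam • 1) ^ N) x = 0)
    (hy : ((T - mu • 1) ^ M) y = 0) :
    b x y = 0 := by
  have haeval (c : ℂ) (k : ℕ) : aeval T ((X - C c) ^ k) = (T - c • 1) ^ k := by
    simp [Algebra.algebraMap_eq_smul_one]
  have hcop : IsCoprime ((X - C lam) ^ N) ((X - C mu) ^ M) :=
    (isCoprime_X_sub_C_of_isUnit_sub (sub_ne_zero.mpr hne).isUnit).pow
  exact LinearMap.IsAdjointPair.apply_eq_zero_of_isCoprime hT hcop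
    (by rwa [haeval]) (by rwa [haeval])

/-- Generalized eigenspaces of a `b`-symmetric endomorphism for distinct
eigenvalues are `b`-orthogonal. -/
theorem generalized_eigenspaces_orthogonal
    {V : Type*} [AddCommGroup V] [Module ℂ V] [FiniteDimensional ℂ V]
    (b : LinearMap.BilinForm ℂ V) (hb : ∀ x y, b x y = b y x)
    (T : Module.End ℂ V) (hT : ∀ x y, b (T x) y = b x (T y))
    (lam mu : ℂ) (hne : lam ≠ mu)
    (x y : V) (N M : ℕ)
    (hx : ((T - lam • 1) ^ N) x = 0)
    (hy : ((T - mu • 1) ^ M) y = 0) :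
    b x y = 0 :=
  generalized_eigenspaces_orthogonal_general b T hT lam mu hne x y N M hx hy
end

section
/- Let V be a finite-dimensional complex vector space, b a nondegenerate symmetric bilinear form on V, and T : V → V a linear endomorphism that is b-symmetric, i.e. b(Tx, y) = b(x, Ty) for all x, y ∈ V. Then for every λ ∈ ℂ, the restriction of b to the generalized λ-eigenspace of T is a nondegenerate bilinear form on that subspace. -/
/-!
For `λ ≠ μ`, generalized eigenvectors `x` for `λ` and `y` for `μ` of a `b`-symmetric `T` are
`b`-orthogonal: from `(λ - μ) b(x, y) = b(x, (T - μ) y) - b((T - λ) x, y)` this follows by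
induction on the nilpotency orders of `x` and `y`. Over `ℂ` the space is the sum of the
generalized eigenspaces, so a vector of the generalized `λ`-eigenspace that is orthogonal to that
eigenspace is orthogonal to everything, hence zero by nondegeneracy.
-/

namespace LinearMap.IsAdjointPair

variable {R M : Type*} [CommRing R] [AddCommGroup M] [Module R M]
  {b : LinearMap.BilinForm R M} {T : Module.End R M}

theorem sub_mul_apply (hT : IsAdjointPair b b T T) (lam mu : R) (x y : M) :
    (lam - mu) * b x y = b x ((T - mu • 1) y) - b ((T - lam • 1) x) y := by
  simp only [LinearMap.sub_apply, LinearMap.smul_apply, Module.End.one_apply, map_sub,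
    LinearMap.map_smul, smul_eq_mul, hT x y]
  ring

theorem apply_eq_zero_of_pow_sub_smul_apply_eq_zero [NoZeroDivisors R] (hT : IsAdjointPair b b T T)
    {lam mu : R} (hne : lam ≠ mu) {N K : ℕ} {x y : M}
    (hx : ((T - lam • 1) ^ N) x = 0) (hy : ((T - mu • 1) ^ K) y = 0) : b x y = 0 := by
  induction N generalizing x K y with
  | zero => simp_all
  | succ N ihN =>
    induction K generalizing y with
    | zero => simp_all
    | succ K ihK =>
      have h₁ : b ((T - lam • 1) x) y = 0 := ihN (by rwa [← Module.End.mul_apply, ← pow_succ]) hy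
      have h₂ : b x ((T - mu • 1) y) = 0 := ihK (by rwa [← Module.End.mul_apply, ← pow_succ])
      have h : (lam - mu) * b x y = 0 := by rw [hT.sub_mul_apply, h₁, h₂, sub_zero]
      exact (mul_eq_zero.mp h).resolve_left (sub_ne_zero.mpr hne)

end LinearMap.IsAdjointPair

theorem bilin_nondegenerate_on_generalized_eigenspace_general
    {V : Type*} [AddCommGroup V] [Module ℂ V] [FiniteDimensional ℂ V]
    (b : LinearMap.BilinForm ℂ V)
    (hnd : ∀ x, (∀ y, b x y = 0) → x = 0)
    (T : Module.End ℂ V) (hT : ∀ x y, b (T x) y = b x (T y))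
    (lam : ℂ) :
    ∀ x : V, (∃ N : ℕ, ((T - lam • 1) ^ N) x = 0) →
      (∀ y : V, (∃ M : ℕ, ((T - lam • 1) ^ M) y = 0) → b x y = 0) → x = 0 := by
  rintro x ⟨N, hx⟩ hxorth
  have hle : ⨆ mu, T.maxGenEigenspace mu ≤ LinearMap.ker (b x) := by
    refine iSup_le fun mu y hy => ?_
    obtain ⟨K, hy⟩ := (T.mem_maxGenEigenspace mu y).mp hy
    obtain rfl | hne := eq_or_ne lam mu
    · exact hxorth y ⟨K, hy⟩
    · exact LinearMap.IsAdjointPair.apply_eq_zero_of_pow_sub_smul_apply_eq_zero hT hne hx hy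
  rw [Module.End.iSup_maxGenEigenspace_eq_top, top_le_iff, LinearMap.ker_eq_top] at hle
  exact hnd x (LinearMap.congr_fun hle)

/-- The restriction of a nondegenerate symmetric bilinear form to a generalized
eigenspace of a `b`-symmetric endomorphism is nondegenerate. -/
theorem bilin_nondegenerate_on_generalized_eigenspace
    {V : Type*} [AddCommGroup V] [Module ℂ V] [FiniteDimensional ℂ V]
    (b : LinearMap.BilinForm ℂ V) (hb : ∀ x y, b x y = b y x)
    (hnd : ∀ x, (∀ y, b x y = 0) → x = 0)
    (T : Module.End ℂ V) (hT : ∀ x y, b (T x) y = b x (T y))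
    (lam : ℂ) :
    ∀ x : V, (∃ N : ℕ, ((T - lam • 1) ^ N) x = 0) →
      (∀ y : V, (∃ M : ℕ, ((T - lam • 1) ^ M) y = 0) → b x y = 0) → x = 0 :=
  bilin_nondegenerate_on_generalized_eigenspace_general b hnd T hT lam
end

section
/- Let V be a finite-dimensional complex vector space, b a nondegenerate symmetric bilinear form on V, d : V → V a linear map with d∘d = 0, and let e : V → V be the b-transpose of d, i.e. b(dx, y) = b(x, ey) for all x, y (so also e∘e = 0). If the Laplacian Δ := d∘e + e∘d is bijective, then the direct sum decomposition V = range d ⊕ range e is b-orthogonal, i.e. b(dx, ey) = 0 for all x, y ∈ V, and the restrictions of b to range d and to range e are both nondegenerate. -/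
/-! Transposing `d ∘ d = 0` gives `e ∘ e = 0`, hence `b (d x) (e y) = b x (e (e y)) = 0`. Surjectivity
of `Δ = d ∘ e + e ∘ d` gives `V = range d + range e`, so a vector of `range d` that is `b`-orthogonal
to `range d` is orthogonal to all of `V` and vanishes; likewise for `range e`. -/

namespace LinearMap

theorem range_sup_range_eq_top_of_surjective_add_comp {R M : Type*} [Semiring R] [AddCommMonoid M]
    [Module R M] {d e : M →ₗ[R] M} (hΔ : Function.Surjective (d ∘ₗ e + e ∘ₗ d)) :
    range d ⊔ range e = ⊤ := by
  refine Submodule.eq_top_iff'.mpr fun v => ?_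
  obtain ⟨w, rfl⟩ := hΔ v
  exact Submodule.add_mem_sup (mem_range_self d (e w)) (mem_range_self e (d w))

namespace BilinForm

variable {R M : Type*} [CommSemiring R] [AddCommMonoid M] [Module R M] {b : LinearMap.BilinForm R M}

theorem transpose_comp_self_eq_zero (hsymm : ∀ x y, b x y = b y x)
    (hnd : ∀ x, (∀ y, b x y = 0) → x = 0) {d e : M →ₗ[R] M}
    (htrans : ∀ x y, b (d x) y = b x (e y)) (hdd : d ∘ₗ d = 0) : e ∘ₗ e = 0 := by
  ext y
  refine hnd _ fun x => ?_
  have hddx : d (d x) = 0 := congr($hdd x)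
  rw [LinearMap.comp_apply, hsymm, ← htrans, ← htrans, hddx, zero_left]

theorem eq_zero_of_forall_mem_eq_zero_of_sup_eq_top (hnd : ∀ x, (∀ y, b x y = 0) → x = 0)
    {U W : Submodule R M} (hUW : U ⊔ W = ⊤) (horth : ∀ u ∈ U, ∀ w ∈ W, b u w = 0)
    {x : M} (hx : x ∈ U) (hxU : ∀ y ∈ U, b x y = 0) : x = 0 := by
  refine hnd x fun v => ?_
  obtain ⟨u, hu, w, hw, rfl⟩ := Submodule.mem_sup.mp (hUW ▸ Submodule.mem_top : v ∈ U ⊔ W)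
  rw [map_add, hxU u hu, horth x hx w hw, add_zero]

end BilinForm

end LinearMap

open LinearMap LinearMap.BilinForm in
theorem hodge_decomposition_b_orthogonal_general
    {V : Type*} [AddCommGroup V] [Module ℂ V]
    (b : LinearMap.BilinForm ℂ V) (hsymm : ∀ x y, b x y = b y x)
    (hnd : ∀ x, (∀ y, b x y = 0) → x = 0)
    (d e : V →ₗ[ℂ] V) (hdd : d ∘ₗ d = 0)
    (htrans : ∀ x y, b (d x) y = b x (e y))
    (hΔ : Function.Bijective (d ∘ₗ e + e ∘ₗ d)) :
    (∀ x y, b (d x) (e y) = 0) ∧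
    (∀ x ∈ LinearMap.range d, (∀ y ∈ LinearMap.range d, b x y = 0) → x = 0) ∧
    (∀ x ∈ LinearMap.range e, (∀ y ∈ LinearMap.range e, b x y = 0) → x = 0) := by
  have hee := transpose_comp_self_eq_zero hsymm hnd htrans hdd
  have horth : ∀ x y, b (d x) (e y) = 0 := fun x y => by
    rw [htrans, ← comp_apply e e, hee, LinearMap.zero_apply, map_zero]
  have hsup := range_sup_range_eq_top_of_surjective_add_comp hΔ.surjective
  refine ⟨horth, fun x hx => ?_, fun x hx => ?_⟩
  · refine eq_zero_of_forall_mem_eq_zero_of_sup_eq_top hnd hsup ?_ hx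
    rintro _ ⟨u, rfl⟩ _ ⟨w, rfl⟩
    exact horth u w
  · refine eq_zero_of_forall_mem_eq_zero_of_sup_eq_top hnd (sup_comm (range d) _ ▸ hsup) ?_ hx
    rintro _ ⟨u, rfl⟩ _ ⟨w, rfl⟩
    rw [hsymm]
    exact horth w u

/-- If `e` is the `b`-transpose of `d`, `d∘d = 0` and the Laplacian
`d∘e + e∘d` is bijective, then the decomposition `V = range d ⊕ range e` is
`b`-orthogonal and `b` restricts nondegenerately to both summands. -/
theorem hodge_decomposition_b_orthogonal
    {V : Type*} [AddCommGroup V] [Module ℂ V] [FiniteDimensional ℂ V]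
    (b : LinearMap.BilinForm ℂ V) (hsymm : ∀ x y, b x y = b y x)
    (hnd : ∀ x, (∀ y, b x y = 0) → x = 0)
    (d e : V →ₗ[ℂ] V) (hdd : d ∘ₗ d = 0)
    (htrans : ∀ x y, b (d x) y = b x (e y))
    (hΔ : Function.Bijective (d ∘ₗ e + e ∘ₗ d)) :
    (∀ x y, b (d x) (e y) = 0) ∧
    (∀ x ∈ LinearMap.range d, (∀ y ∈ LinearMap.range d, b x y = 0) → x = 0) ∧
    (∀ x ∈ LinearMap.range e, (∀ y ∈ LinearMap.range e, b x y = 0) → x = 0) :=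
  hodge_decomposition_b_orthogonal_general b hsymm hnd d e hdd htrans hΔ
end

section
/- Let C⁰, C¹, …, Cⁿ be finite-dimensional complex vector spaces with linear maps d_q : C^q → C^{q+1} satisfying d_{q+1}∘d_q = 0 and e_q : C^q → C^{q−1} satisfying e_{q−1}∘e_q = 0 (with d and e zero outside the range of degrees). Suppose each Laplacian Δ_q := d_{q−1}∘e_q + e_{q+1}∘d_q : C^q → C^q is bijective. Then Δ_q maps the subspace range(d_{q−1}) ⊆ C^q into itself, and the following determinant identity holds: ∏_{q=0}^{n} (det Δ_q)^{(−1)^q · q} = ∏_{q=0}^{n} (det(Δ_q restricted to range d_{q−1}))^{(−1)^q}, where all determinants are nonzero so the integer powers are taken in ℂ \ {0}. -/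
open LinearMap

/-- Determinant of a product map is the product of determinants. -/
private lemma det_prodMap' {M N : Type*} [AddCommGroup M] [AddCommGroup N]
    [Module ℂ M] [Module ℂ N] [FiniteDimensional ℂ M] [FiniteDimensional ℂ N]
    (f : M →ₗ[ℂ] M) (g : N →ₗ[ℂ] N) :
    LinearMap.det (f.prodMap g) = LinearMap.det f * LinearMap.det g := by
  classical
  let b := Module.Free.chooseBasis ℂ M
  let c := Module.Free.chooseBasis ℂ N
  rw [← LinearMap.det_toMatrix (b.prod c), LinearMap.toMatrix_prodMap b c f g,
    Matrix.det_fromBlocks_zero₂₁, LinearMap.det_toMatrix, LinearMap.det_toMatrix]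

/-- Determinants are preserved under conjugation by a linear equivalence. -/
private lemma det_conj'' {M N : Type*} [AddCommGroup M] [AddCommGroup N]
    [Module ℂ M] [Module ℂ N] (f : M →ₗ[ℂ] M) (g : N →ₗ[ℂ] N) (eq : M ≃ₗ[ℂ] N)
    (h : ∀ x, g (eq x) = eq (f x)) :
    LinearMap.det g = LinearMap.det f := by
  have hg : g = (eq : M →ₗ[ℂ] N) ∘ₗ f ∘ₗ (eq.symm : N →ₗ[ℂ] M) := by
    ext y
    simp only [coe_comp, Function.comp_apply, LinearEquiv.coe_coe]
    rw [← h, eq.apply_symm_apply]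
  rw [hg, LinearMap.det_conj]

/-- Telescoping product identity. -/
private lemma telescope' (A : ℕ → ℂ) (hA : ∀ q, A q ≠ 0) : ∀ n : ℕ,
    ∏ q ∈ Finset.range (n + 1), (A q * A (q + 1)) ^ ((-1 : ℤ) ^ q * q) =
      (∏ q ∈ Finset.range n, A (q + 1) ^ ((-1 : ℤ) ^ (q + 1))) *
        A (n + 1) ^ ((-1 : ℤ) ^ n * n) := by
  intro n
  induction n with
  | zero => simp
  | succ n ih =>
    rw [Finset.prod_range_succ, ih, Finset.prod_range_succ]
    have h1 : A (n + 1) ≠ 0 := hA _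
    have e1 : A (n + 1) ^ ((-1 : ℤ) ^ n * n) * A (n + 1) ^ ((-1 : ℤ) ^ (n + 1) * (n + 1)) =
        A (n + 1) ^ ((-1 : ℤ) ^ (n + 1)) := by
      rw [← zpow_add₀ h1]
      congr 1
      ring
    rw [mul_zpow]
    calc (∏ q ∈ Finset.range n, A (q + 1) ^ ((-1 : ℤ) ^ (q + 1))) *
          A (n + 1) ^ ((-1 : ℤ) ^ n * n) *
          (A (n + 1) ^ ((-1 : ℤ) ^ (n + 1) * (n + 1)) *
            A (n + 2) ^ ((-1 : ℤ) ^ (n + 1) * (n + 1)))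
        = (∏ q ∈ Finset.range n, A (q + 1) ^ ((-1 : ℤ) ^ (q + 1))) *
          (A (n + 1) ^ ((-1 : ℤ) ^ n * n) * A (n + 1) ^ ((-1 : ℤ) ^ (n + 1) * (n + 1))) *
          A (n + 2) ^ ((-1 : ℤ) ^ (n + 1) * (n + 1)) := by ring
      _ = _ := by rw [e1]; push_cast; ring

/-- Telescoping determinant identity for the torsion of a finite complex with
bijective Laplacians: `∏ (det Δ_q)^{(-1)^q q} = ∏ (det Δ_q|_{range d_{q-1}})^{(-1)^q}`. -/
theorem torsion_telescoping_determinant_identity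
    (n : ℕ) (C : ℕ → Type) [∀ q, AddCommGroup (C q)] [∀ q, Module ℂ (C q)]
    [∀ q, FiniteDimensional ℂ (C q)]
    (hC : ∀ q, n < q → Subsingleton (C q))
    (d : ∀ q, C q →ₗ[ℂ] C (q + 1)) (e : ∀ q, C (q + 1) →ₗ[ℂ] C q)
    (hdd : ∀ q, d (q + 1) ∘ₗ d q = 0) (hee : ∀ q, e q ∘ₗ e (q + 1) = 0)
    (Δ : ∀ q, C q →ₗ[ℂ] C q)
    (hΔ0 : Δ 0 = e 0 ∘ₗ d 0)
    (hΔs : ∀ q, Δ (q + 1) = d q ∘ₗ e q + e (q + 1) ∘ₗ d (q + 1))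
    (hbij : ∀ q, Function.Bijective (Δ q)) :
    (∀ q, LinearMap.det (Δ q) ≠ 0) ∧
    ∃ hinv : ∀ q, ∀ x ∈ LinearMap.range (d q), Δ (q + 1) x ∈ LinearMap.range (d q),
      ∏ q ∈ Finset.range (n + 1), LinearMap.det (Δ q) ^ ((-1 : ℤ) ^ q * q) =
      ∏ q ∈ Finset.range n,
        LinearMap.det ((Δ (q + 1)).restrict (hinv q)) ^ ((-1 : ℤ) ^ (q + 1)) := by
  -- pointwise versions of the complex identities
  have hdd' : ∀ q x, d (q + 1) (d q x) = 0 := by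
    intro q x; have := DFunLike.congr_fun (hdd q) x; simpa using this
  have hee' : ∀ q x, e q (e (q + 1) x) = 0 := by
    intro q x; have := DFunLike.congr_fun (hee q) x; simpa using this
  -- commutation of the Laplacian with d and with e
  have hΔd : ∀ q x, Δ (q + 1) (d q x) = d q (Δ q x) := by
    intro q x
    cases q with
    | zero => simp [hΔs, hΔ0, hdd']
    | succ p => simp [hΔs, hdd', map_add]
  have hΔe : ∀ q x, Δ q (e q x) = e q (Δ (q + 1) x) := by
    intro q x
    cases q with
    | zero => simp [hΔs, hΔ0, hee', map_add]
    | succ p => simp [hΔs, hee', map_add]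
  -- invariance of the range of d
  have hinv : ∀ q, ∀ x ∈ LinearMap.range (d q), Δ (q + 1) x ∈ LinearMap.range (d q) := by
    rintro q x ⟨u, rfl⟩
    exact ⟨Δ q u, (hΔd q u).symm⟩
  -- the determinants are nonzero
  have hdet : ∀ q, LinearMap.det (Δ q) ≠ 0 := by
    intro q
    have := (LinearEquiv.ofBijective (Δ q) (hbij q)).isUnit_det'
    have h : ((LinearEquiv.ofBijective (Δ q) (hbij q)) : C q →ₗ[ℂ] C q) = Δ q :=
      LinearMap.ext fun x => rfl
    rw [h] at this
    exact isUnit_iff_ne_zero.mp this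
  -- harmonic vanishing in positive degrees
  have hharm : ∀ q x, d (q + 1) x = 0 → e q x = 0 → x = 0 := by
    intro q x h1 h2
    apply (hbij (q + 1)).injective (a₂ := 0)
    rw [hΔs]
    simp [h1, h2]
  -- d 0 is injective
  have hd0inj : Function.Injective (d 0) := by
    intro x y hxy
    apply (hbij 0).injective
    rw [hΔ0]; simp [hxy]
  -- the sequence of determinants of restrictions
  set A : ℕ → ℂ := fun q =>
    Nat.casesOn q 1 (fun p => LinearMap.det ((Δ (p + 1)).restrict (hinv p))) with hA_def
  have hA0 : A 0 = 1 := rfl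
  have hAs : ∀ p, A (p + 1) = LinearMap.det ((Δ (p + 1)).restrict (hinv p)) := fun _ => rfl
  -- the key factorization  det Δ m = A m * A (m+1)
  have key : ∀ m, LinearMap.det (Δ m) = A m * A (m + 1) := by
    intro m
    cases m with
    | zero =>
      have h1 : LinearMap.det ((Δ 1).restrict (hinv 0)) = LinearMap.det (Δ 0) := by
        apply det_conj'' (Δ 0) _ (LinearEquiv.ofInjective (d 0) hd0inj)
        intro x
        apply Subtype.ext
        rw [LinearMap.restrict_coe_apply]
        simp only [LinearEquiv.ofInjective_apply]
        exact hΔd 0 x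
      rw [hA0, hAs 0, h1, one_mul]
    | succ p =>
      set R : Submodule ℂ (C (p + 1)) := LinearMap.range (d p) with hR
      set E : Submodule ℂ (C (p + 1)) := LinearMap.range (e (p + 1)) with hE
      have hcompl : IsCompl R E := by
        constructor
        · rw [disjoint_iff, eq_bot_iff]
          rintro x ⟨hxR, hxE⟩
          obtain ⟨u, rfl⟩ := hxR
          obtain ⟨v, hv⟩ := hxE
          have h1 : d (p + 1) (d p u) = 0 := hdd' p u
          have h2 : e p (d p u) = 0 := by rw [← hv]; exact hee' p v
          simp [hharm p _ h1 h2]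
        · rw [codisjoint_iff, eq_top_iff]
          intro x _
          obtain ⟨y, rfl⟩ := (hbij (p + 1)).surjective x
          rw [hΔs]
          exact Submodule.add_mem_sup ⟨e p y, rfl⟩ ⟨d (p + 1) y, rfl⟩
      have hEinv : ∀ x ∈ E, Δ (p + 1) x ∈ E := by
        rintro x ⟨v, rfl⟩
        exact ⟨Δ (p + 2) v, (hΔe (p + 1) v).symm⟩
      have hsplit : LinearMap.det (Δ (p + 1)) =
          LinearMap.det ((Δ (p + 1)).restrict (hinv p)) *
            LinearMap.det ((Δ (p + 1)).restrict hEinv) := by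
        rw [← det_prodMap']
        apply det_conj'' _ _ (Submodule.prodEquivOfIsCompl R E hcompl)
        intro z
        rw [Submodule.coe_prodEquivOfIsCompl', Submodule.coe_prodEquivOfIsCompl']
        simp only [LinearMap.prodMap_apply, LinearMap.restrict_coe_apply, map_add]
      -- identify the determinant on E with A (p + 2)
      have hmapsto : ∀ x ∈ E, d (p + 1) x ∈ LinearMap.range (d (p + 1)) := by
        intro x _; exact LinearMap.mem_range_self _ x
      set φ : E →ₗ[ℂ] LinearMap.range (d (p + 1)) := (d (p + 1)).restrict hmapsto with hφ
      have hφbij : Function.Bijective φ := by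
        constructor
        · intro x y hxy
          have hval : d (p + 1) (x : C (p + 1)) = d (p + 1) (y : C (p + 1)) := by
            have := congrArg Subtype.val hxy
            rwa [hφ, LinearMap.restrict_coe_apply, LinearMap.restrict_coe_apply] at this
          obtain ⟨u, hu⟩ := x.2
          obtain ⟨v, hv⟩ := y.2
          apply Subtype.ext
          have h1 : d (p + 1) ((x : C (p + 1)) - y) = 0 := by
            rw [map_sub, hval, sub_self]
          have h2 : e p ((x : C (p + 1)) - y) = 0 := by
            rw [map_sub, ← hu, ← hv, hee', hee', sub_self]
          exact sub_eq_zero.mp (hharm p _ h1 h2)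
        · rintro ⟨y, u, rfl⟩
          have hu : u ∈ R ⊔ E := by rw [hcompl.sup_eq_top]; trivial
          obtain ⟨r, hr, s, hs, rfl⟩ := Submodule.mem_sup.mp hu
          obtain ⟨w, rfl⟩ := hr
          refine ⟨⟨s, hs⟩, Subtype.ext ?_⟩
          rw [hφ, LinearMap.restrict_coe_apply]
          show d (p + 1) s = d (p + 1) (d p w + s)
          rw [map_add, hdd', zero_add]
      have hEdet : LinearMap.det ((Δ (p + 1)).restrict hEinv) =
          LinearMap.det ((Δ (p + 2)).restrict (hinv (p + 1))) := by
        symm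
        apply det_conj'' ((Δ (p + 1)).restrict hEinv) _ (LinearEquiv.ofBijective φ hφbij)
        intro x
        apply Subtype.ext
        rw [LinearMap.restrict_coe_apply]
        simp only [LinearEquiv.ofBijective_apply]
        rw [hφ, LinearMap.restrict_coe_apply, LinearMap.restrict_coe_apply]
        exact hΔd (p + 1) x
      rw [hsplit, hEdet, hAs p, hAs (p + 1)]
  -- A (n + 1) = 1 since C (n + 1) is trivial
  have hAtop : A (n + 1) = 1 := by
    haveI : Subsingleton (C (n + 1)) := hC (n + 1) (Nat.lt_succ_self n)
    haveI : Subsingleton (LinearMap.range (d n)) := by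
      constructor; intro a b; exact Subtype.ext (Subsingleton.elim _ _)
    rw [hAs n]
    exact LinearMap.det_eq_one_of_subsingleton _
  -- A is nowhere zero
  have hAne : ∀ q, A q ≠ 0 := by
    intro q
    cases q with
    | zero => rw [hA0]; exact one_ne_zero
    | succ p =>
      intro h
      apply hdet p
      rw [key p, h, mul_zero]
  refine ⟨hdet, hinv, ?_⟩
  calc ∏ q ∈ Finset.range (n + 1), LinearMap.det (Δ q) ^ ((-1 : ℤ) ^ q * q)
      = ∏ q ∈ Finset.range (n + 1), (A q * A (q + 1)) ^ ((-1 : ℤ) ^ q * q) :=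
        Finset.prod_congr rfl (fun q _ => by rw [key q])
    _ = (∏ q ∈ Finset.range n, A (q + 1) ^ ((-1 : ℤ) ^ (q + 1))) *
          A (n + 1) ^ ((-1 : ℤ) ^ n * n) := telescope' A hAne n
    _ = ∏ q ∈ Finset.range n,
          LinearMap.det ((Δ (q + 1)).restrict (hinv q)) ^ ((-1 : ℤ) ^ (q + 1)) := by
        rw [hAtop, one_zpow, mul_one]
end

section
/- Let V be a finite-dimensional complex vector space and d, e : V → V linear maps with d∘d = 0 and e∘e = 0; set Δ := d∘e + e∘d and let V₀ := ⋃_{N≥0} ker Δ^N be the generalized 0-eigenspace of Δ. Then d(V₀) ⊆ V₀, d(V₀) ⊆ ker d ∩ V₀, and the linear map (ker d ∩ V₀)/d(V₀) → (ker d)/(range d) induced by the inclusion V₀ ⊆ V is an isomorphism. Equivalently: ker d = (ker d ∩ V₀) + range d, and (ker d ∩ V₀) ∩ range d = d(V₀). -/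
/-!
The Laplacian `Δ = d e + e d` commutes with `d` because `d² = 0`, so both pieces of the Fitting
decomposition `V = V₀ ⊕ W` of `Δ` (with `W = ⋂ₙ range Δⁿ`) are `d`-stable, and the cohomology of
`V` splits as that of `V₀` plus that of `W`. On `W` the Laplacian is bijective, which makes `W`
acyclic: a cocycle `x = Δ u` in `W` satisfies `Δ (d u) = d x = 0`, hence `d u = 0` and
`x = d (e u)`.
-/

open LinearMap

namespace Module.End

variable {R M : Type*} [CommRing R] [AddCommGroup M] [Module R M]

lemma mem_maxGenEigenspace_zero {f : End R M} {x : M} :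
    x ∈ f.maxGenEigenspace 0 ↔ ∃ k : ℕ, (f ^ k) x = 0 := by
  simp only [mem_maxGenEigenspace, zero_smul, sub_zero]

lemma mapsTo_iInf_range_pow_of_comm {f g : End R M} (h : Commute f g) :
    Set.MapsTo g ↑(⨅ n : ℕ, range (f ^ n)) ↑(⨅ n : ℕ, range (f ^ n)) := by
  intro x hx
  simp only [SetLike.mem_coe, Submodule.mem_iInf, mem_range] at hx ⊢
  intro n
  obtain ⟨y, rfl⟩ := hx n
  exact ⟨g y, by rw [← mul_apply, (h.pow_left n).eq, mul_apply]⟩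

lemma iInf_range_pow_le_map_self [IsArtinian R M] (f : End R M) :
    ⨅ n : ℕ, range (f ^ n) ≤ (⨅ n : ℕ, range (f ^ n)).map f := by
  obtain ⟨n, hn⟩ := Filter.eventually_atTop.mp f.eventually_iInf_range_pow_eq
  refine le_of_eq ?_
  calc ⨅ n : ℕ, range (f ^ n) = range (f ^ (n + 1)) := hn (n + 1) n.le_succ
    _ = (range (f ^ n)).map f := by rw [pow_succ', mul_eq_comp, range_comp]
    _ = (⨅ n : ℕ, range (f ^ n)).map f := by rw [hn n le_rfl]

variable [IsNoetherian R M] [IsArtinian R M]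

lemma isCompl_maxGenEigenspace_zero_iInf_range_pow (f : End R M) :
    IsCompl (f.maxGenEigenspace 0) (⨅ n : ℕ, range (f ^ n)) := by
  rw [← iSup_genEigenspace_eq]
  simpa [genEigenspace_nat] using isCompl_iSup_ker_pow_iInf_range_pow f

lemma disjoint_iInf_range_pow_ker (f : End R M) :
    Disjoint (⨅ n : ℕ, range (f ^ n)) (ker f) :=
  (isCompl_maxGenEigenspace_zero_iInf_range_pow f).symm.disjoint.mono_right fun x hx ↦
    mem_maxGenEigenspace_zero.2 ⟨1, by simpa using hx⟩

end Module.End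

section InvariantComplement

variable {R M : Type*} [Ring R] [AddCommGroup M] [Module R M] {d : M →ₗ[R] M}
  {p q : Submodule R M}

lemma exists_add_of_isCompl (hpq : IsCompl p q) (x : M) : ∃ a ∈ p, ∃ b ∈ q, a + b = x :=
  Submodule.mem_sup.1 (hpq.sup_eq_top ▸ Submodule.mem_top)

lemma ker_eq_ker_inf_sup_ker_inf (hpq : IsCompl p q) (hp : Set.MapsTo d p p)
    (hq : Set.MapsTo d q q) :
    ker d = (ker d ⊓ p) ⊔ (ker d ⊓ q) := by
  refine le_antisymm (fun x hx ↦ ?_) (sup_le inf_le_left inf_le_left)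
  obtain ⟨a, ha, b, hb, rfl⟩ := exists_add_of_isCompl hpq x
  have hab : d a = -d b := eq_neg_of_add_eq_zero_left (by simpa using hx)
  have hda : d a = 0 := Submodule.disjoint_def.1 hpq.disjoint _ (hp ha) (hab ▸ q.neg_mem (hq hb))
  have hdb : d b = 0 := by simpa [hda] using hab
  exact Submodule.mem_sup.2 ⟨a, ⟨hda, ha⟩, b, ⟨hdb, hb⟩, rfl⟩

lemma inf_range_eq_map_of_isCompl (hpq : IsCompl p q) (hp : Set.MapsTo d p p)
    (hq : Set.MapsTo d q q) :
    p ⊓ range d = p.map d := by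
  refine le_antisymm ?_ (le_inf (Submodule.map_le_iff_le_comap.2 hp) map_le_range)
  rintro _ ⟨hz, x, rfl⟩
  obtain ⟨a, ha, b, hb, rfl⟩ := exists_add_of_isCompl hpq x
  have hdb : d b = 0 := Submodule.disjoint_def.1 hpq.disjoint _
    (by simpa using p.sub_mem hz (hp ha)) (hq hb)
  exact ⟨a, ha, by simp [hdb]⟩

end InvariantComplement

section Laplacian

variable {R M : Type*} [Ring R] [AddCommGroup M] [Module R M] {d e : Module.End R M}

lemma commute_laplacian (hdd : d * d = 0) : Commute d (d * e + e * d) := by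
  simp only [Commute, SemiconjBy, mul_add, add_mul, ← mul_assoc, hdd, zero_mul]
  simp only [mul_assoc, hdd, mul_zero, add_zero, zero_add]

lemma ker_inf_le_range_of_laplacian (hdd : d * d = 0) {q : Submodule R M} (hdq : Set.MapsTo d q q)
    (hq : q ≤ q.map (d * e + e * d)) (hinj : Disjoint q (ker (d * e + e * d))) :
    ker d ⊓ q ≤ range d := by
  rintro x ⟨hx, hxq⟩
  obtain ⟨u, hu, rfl⟩ := hq hxq
  have hdu : d u = 0 := Submodule.disjoint_def.1 hinj _ (hdq hu) <| by
    rw [mem_ker, ← Module.End.mul_apply, ← (commute_laplacian hdd).eq]; exact hx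
  exact ⟨e u, by simp [hdu]⟩

end Laplacian

open Module.End in
theorem generalized_zero_eigenspace_computes_cohomology_general
    {V : Type*} [AddCommGroup V] [Module ℂ V] [FiniteDimensional ℂ V]
    (d e : V →ₗ[ℂ] V) (hdd : d ∘ₗ d = 0)
    (V0 : Submodule ℂ V)
    (hV0 : ∀ x, x ∈ V0 ↔ ∃ N : ℕ, ((d ∘ₗ e + e ∘ₗ d) ^ N) x = 0) :
    Submodule.map d V0 ≤ V0 ∧
    Submodule.map d V0 ≤ LinearMap.ker d ⊓ V0 ∧
    LinearMap.ker d = (LinearMap.ker d ⊓ V0) ⊔ LinearMap.range d ∧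
    (LinearMap.ker d ⊓ V0) ⊓ LinearMap.range d = Submodule.map d V0 := by
  set Δ : Module.End ℂ V := d * e + e * d
  obtain rfl : V0 = Δ.maxGenEigenspace 0 := by ext x; rw [hV0, mem_maxGenEigenspace_zero]; rfl
  have hcompl := isCompl_maxGenEigenspace_zero_iInf_range_pow Δ
  have hdΔ : Commute d Δ := commute_laplacian hdd
  have hdV0 := mapsTo_maxGenEigenspace_of_comm hdΔ.symm 0
  have hdW := mapsTo_iInf_range_pow_of_comm hdΔ.symm
  have hmap : (Δ.maxGenEigenspace 0).map d ≤ Δ.maxGenEigenspace 0 :=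
    Submodule.map_le_iff_le_comap.2 hdV0
  have hrange : range d ≤ ker d := range_le_ker_iff.2 hdd
  have hacyclic : ker d ⊓ ⨅ n : ℕ, range (Δ ^ n) ≤ range d :=
    ker_inf_le_range_of_laplacian hdd hdW (iInf_range_pow_le_map_self Δ)
      (disjoint_iInf_range_pow_ker Δ)
  refine ⟨hmap, le_inf (map_le_range.trans hrange) hmap, ?_, ?_⟩
  · refine le_antisymm ?_ (sup_le inf_le_left hrange)
    calc ker d = _ := ker_eq_ker_inf_sup_ker_inf hcompl hdV0 hdW
      _ ≤ _ := sup_le_sup_left hacyclic _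
  · rw [inf_assoc, inf_range_eq_map_of_isCompl hcompl hdV0 hdW]
    exact inf_eq_right.2 (map_le_range.trans hrange)

/-- The generalized `0`-eigenspace `V₀` of the Laplacian `Δ = d∘e + e∘d` is
`d`-invariant and computes the cohomology of `(V, d)`:
`ker d = (ker d ∩ V₀) + range d` and `(ker d ∩ V₀) ∩ range d = d(V₀)`. -/
theorem generalized_zero_eigenspace_computes_cohomology
    {V : Type*} [AddCommGroup V] [Module ℂ V] [FiniteDimensional ℂ V]
    (d e : V →ₗ[ℂ] V) (hdd : d ∘ₗ d = 0) (hee : e ∘ₗ e = 0)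
    (V0 : Submodule ℂ V)
    (hV0 : ∀ x, x ∈ V0 ↔ ∃ N : ℕ, ((d ∘ₗ e + e ∘ₗ d) ^ N) x = 0) :
    Submodule.map d V0 ≤ V0 ∧
    Submodule.map d V0 ≤ LinearMap.ker d ⊓ V0 ∧
    LinearMap.ker d = (LinearMap.ker d ⊓ V0) ⊔ LinearMap.range d ∧
    (LinearMap.ker d ⊓ V0) ⊓ LinearMap.range d = Submodule.map d V0 :=
  generalized_zero_eigenspace_computes_cohomology_general d e hdd V0 hV0
end

section
/- Let v ∈ ℂ² be a nonzero vector with vᵀv = 0 (for instance v = (1, i)), let z ∈ ℂ be nonzero and set w := z·vᵀ : ℂ² → ℂ. Then the complex ℂ →^{·v} ℂ² →^{w} ℂ (multiplication by v followed by w) is exact: the first map is injective, the second is surjective, and the kernel of w equals the image of v. Moreover, with the standard symmetric bilinear forms, the Laplacians of this complex satisfy Δ₀ = vᵀv = 0, Δ₂ = w∘wᵀ = 0, Δ₁ = v·vᵀ + wᵀ∘w = (1+z²)·v·vᵀ, and Δ₁∘Δ₁ = 0; in particular every Δ_q is nilpotent, so the kernel of the Laplacian does not compute the (vanishing) cohomology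 of this acyclic complex. -/
/-- The example of an acyclic complex `ℂ → ℂ² → ℂ` built from an isotropic
vector `v` (`vᵀv = 0`) whose Laplacians are all nilpotent: `Δ₀ = 0`, `Δ₂ = 0`,
`Δ₁ = (1+z²)·v·vᵀ` and `Δ₁² = 0`. -/
theorem isotropic_vector_complex_example
    (v : Fin 2 → ℂ) (hv : v ≠ 0) (hvv : v 0 * v 0 + v 1 * v 1 = 0)
    (z : ℂ) (hz : z ≠ 0)
    (d0 : ℂ →ₗ[ℂ] (Fin 2 → ℂ)) (hd0 : ∀ x, d0 x = x • v)
    (w : (Fin 2 → ℂ) →ₗ[ℂ] ℂ) (hw : ∀ u, w u = z * (v 0 * u 0 + v 1 * u 1))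
    (vT : (Fin 2 → ℂ) →ₗ[ℂ] ℂ) (hvT : ∀ u, vT u = v 0 * u 0 + v 1 * u 1)
    (wT : ℂ →ₗ[ℂ] (Fin 2 → ℂ)) (hwT : ∀ x, wT x = (z * x) • v) :
    Function.Injective d0 ∧
    Function.Surjective w ∧
    LinearMap.ker w = LinearMap.range d0 ∧
    vT ∘ₗ d0 = 0 ∧
    w ∘ₗ wT = 0 ∧
    d0 ∘ₗ vT + wT ∘ₗ w = (1 + z ^ 2) • (d0 ∘ₗ vT) ∧
    (d0 ∘ₗ vT + wT ∘ₗ w) ∘ₗ (d0 ∘ₗ vT + wT ∘ₗ w) = 0 := by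
  have hv0 : v 0 ≠ 0 := by
    intro h
    have h1 : v 1 = 0 := by
      have := hvv; rw [h] at this; simpa [mul_self_eq_zero] using this
    apply hv
    funext i; fin_cases i <;> simp [h, h1]
  have hv1 : v 1 ≠ 0 := by
    intro h
    have h0 : v 0 = 0 := by
      have := hvv; rw [h] at this; simpa [mul_self_eq_zero] using this
    exact hv0 h0
  refine ⟨?_, ?_, ?_, ?_, ?_, ?_, ?_⟩
  · intro a b hab
    rw [hd0, hd0] at hab
    have := congrFun hab 0
    simp only [Pi.smul_apply, smul_eq_mul] at this
    exact mul_right_cancel₀ hv0 this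
  · intro t
    refine ⟨fun i => if i = 0 then t / (z * v 0) else 0, ?_⟩
    rw [hw]
    simp
    field_simp
  · ext u
    simp only [LinearMap.mem_ker, LinearMap.mem_range]
    constructor
    · intro h
      rw [hw] at h
      have h' : v 0 * u 0 + v 1 * u 1 = 0 := by
        rcases mul_eq_zero.mp h with h' | h'
        · exact absurd h' hz
        · exact h'
      refine ⟨u 0 / v 0, ?_⟩
      rw [hd0]
      funext i
      fin_cases i
      · simp; field_simp
      · simp only [Pi.smul_apply, smul_eq_mul]
        have key2 : v 0 * (v 0 * u 1) = v 0 * (u 0 * v 1) := by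
          linear_combination u 1 * hvv - v 1 * h'
        have key := mul_left_cancel₀ hv0 key2
        field_simp
        simp only [Fin.mk_one]
        linear_combination -key
    · rintro ⟨x, rfl⟩
      rw [hw, hd0]
      simp only [Pi.smul_apply, smul_eq_mul]
      linear_combination z * x * hvv
  · apply LinearMap.ext; intro x
    simp only [LinearMap.comp_apply, LinearMap.zero_apply]
    rw [hd0, hvT]
    simp only [Pi.smul_apply, smul_eq_mul]
    linear_combination x * hvv
  · apply LinearMap.ext; intro x
    simp only [LinearMap.comp_apply, LinearMap.zero_apply]
    rw [hwT, hw]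
    simp only [Pi.smul_apply, smul_eq_mul]
    linear_combination z * (z * x) * hvv
  · apply LinearMap.ext; intro u
    simp only [LinearMap.add_apply, LinearMap.comp_apply, LinearMap.smul_apply]
    rw [hd0, hwT, hvT, hw]
    funext i
    simp only [Pi.add_apply, Pi.smul_apply, smul_eq_mul]
    ring
  · apply LinearMap.ext; intro u
    simp only [LinearMap.comp_apply, LinearMap.add_apply, LinearMap.zero_apply]
    funext i
    simp only [hd0, hwT, hvT, hw, Pi.add_apply, Pi.smul_apply, smul_eq_mul,
      Pi.zero_apply]
    linear_combination ((1 + z ^ 2) ^ 2 * (v 0 * u 0 + v 1 * u 1) * v i) * hvv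
end

section
/- Let V be a finite-dimensional complex vector space, b a nondegenerate symmetric bilinear form on V, and V* its dual space. Let ♭ : V → V* be the isomorphism x ↦ b(x, −), and define the dual bilinear form b' on V* by b'(α, β) := α(♭⁻¹β). Define the canonical bilinear form b_can on V ⊕ V* by b_can((x₁,α₁),(x₂,α₂)) := α₁(x₂) + α₂(x₁). Then b_can is a nondegenerate symmetric bilinear form, and b_can and the direct sum form b ⊕ b' (given by (b⊕b')((x₁,α₁),(x₂,α₂)) = b(x₁,x₂) + b'(α₁,α₂)) lie in the same path component of the space of nondegenerate symmetric bilinear forms on V ⊕ V*: there is a continuous path t ↦ b_t of nondegenerate symmetric bilinear forms on V ⊕ V* joining b_can to b ⊕ b'. -/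
/-!
Let `Φ (x, α) = (♭⁻¹ α, ♭ x)`. Then `(b ⊕ b') p q = b_can (Φ p) q`, and `Φ` is an involution,
so `(a - c Φ) (a + c Φ) = a² - c²`. Hence `a • b_can + c • (b ⊕ b') = b_can ((a + c Φ) ·) ·` is
nondegenerate whenever `a² ≠ c²`, and along `a = (1 + e^{iπt}) / 2`, `c = (1 - e^{iπt}) / 2` one
has `a² - c² = e^{iπt} ≠ 0`.
-/

open Function LinearMap Module
open LinearMap (BilinForm)

section Involution

variable {K M : Type*} [Field K] [AddCommGroup M] [Module K M]

theorem injective_smul_id_add_smul_of_involutive {Φ : M →ₗ[K] M} (hΦ : Involutive Φ)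
    {a c : K} (hac : a ^ 2 ≠ c ^ 2) : Injective (a • LinearMap.id + c • Φ : M →ₗ[K] M) := by
  refine (injective_iff_map_eq_zero _).2 fun x hx => ?_
  simp only [LinearMap.add_apply, LinearMap.smul_apply, LinearMap.id_apply] at hx
  have hΦx : a • Φ x + c • x = 0 := by
    simpa [hΦ x, add_comm] using congrArg Φ hx
  have : (a ^ 2 - c ^ 2) • x = a • (a • x + c • Φ x) - c • (a • Φ x + c • x) := by module
  rw [hx, hΦx, smul_zero, smul_zero, sub_zero] at this
  exact (smul_eq_zero.1 this).resolve_left (sub_ne_zero.2 hac)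

end Involution

namespace LinearMap.BilinForm

section Semiring

variable {R M : Type*} [CommSemiring R] [AddCommMonoid M] [Module R M]

theorem separatingLeft_compLeft_of_injective {B : BilinForm R M} (hB : B.SeparatingLeft)
    {f : M →ₗ[R] M} (hf : Injective f) : (B.compLeft f).SeparatingLeft :=
  fun x hx => hf <| by simpa using hB (f x) hx

end Semiring

variable {M : Type*} [AddCommGroup M] [Module ℂ M]

theorem exists_path_to_compLeft_of_involutive {B : BilinForm ℂ M} (hB : B.IsSymm)
    (hB' : B.SeparatingLeft) {Φ : M →ₗ[ℂ] M} (hΦ : Involutive Φ) (hBΦ : (B.compLeft Φ).IsSymm) :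
    ∃ P : ℝ → BilinForm ℂ M, (∀ x y, Continuous fun t => P t x y) ∧
      P 0 = B ∧ P 1 = B.compLeft Φ ∧ ∀ t, (P t).IsSymm ∧ (P t).SeparatingLeft := by
  set z : ℝ → ℂ := fun t => Complex.exp (Real.pi * Complex.I * t)
  set a : ℝ → ℂ := fun t => (1 + z t) / 2
  set c : ℝ → ℂ := fun t => (1 - z t) / 2
  have hz0 : z 0 = 1 := by simp [z]
  have hz1 : z 1 = -1 := by simp [z]
  have hac : ∀ t, a t ^ 2 ≠ c t ^ 2 := fun t h => Complex.exp_ne_zero _ <| by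
    linear_combination h
  refine ⟨fun t => a t • B + c t • B.compLeft Φ, fun x y => ?_, ?_, ?_, fun t => ⟨?_, ?_⟩⟩
  · simp only [LinearMap.add_apply, LinearMap.smul_apply, smul_eq_mul]
    fun_prop
  · simp [a, c, hz0]
  · simp [a, c, hz1]
  · exact (hB.smul _).add (hBΦ.smul _)
  · convert separatingLeft_compLeft_of_injective hB'
      (injective_smul_id_add_smul_of_involutive hΦ (hac t)) using 1
    ext x y
    simp

end LinearMap.BilinForm

theorem bcan_homotopic_to_b_oplus_bdual_general
    {V : Type*} [AddCommGroup V] [Module ℂ V]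
    (b : LinearMap.BilinForm ℂ V) (hsymm : ∀ x y, b x y = b y x)
    (flat : V ≃ₗ[ℂ] Module.Dual ℂ V) (hflat : ∀ x y, flat x y = b x y)
    (bcan bsum : LinearMap.BilinForm ℂ (V × Module.Dual ℂ V))
    (hbcan : ∀ p q : V × Module.Dual ℂ V, bcan p q = p.2 q.1 + q.2 p.1)
    (hbsum : ∀ p q : V × Module.Dual ℂ V,
      bsum p q = b p.1 q.1 + p.2 (flat.symm q.2)) :
    ((∀ p q, bcan p q = bcan q p) ∧ (∀ p, (∀ q, bcan p q = 0) → p = 0)) ∧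
    ∃ B : ℝ → LinearMap.BilinForm ℂ (V × Module.Dual ℂ V),
      (∀ p q, Continuous fun t => B t p q) ∧
      B 0 = bcan ∧ B 1 = bsum ∧
      ∀ t, (∀ p q, B t p q = B t q p) ∧ (∀ p, (∀ q, B t p q = 0) → p = 0) := by
  have hdual : ∀ α β : Dual ℂ V, α (flat.symm β) = β (flat.symm α) := fun α β => by
    conv_lhs => rw [← flat.apply_symm_apply α]
    rw [hflat, hsymm, ← hflat, flat.apply_symm_apply]
  let e := LinearEquiv.prodComm ℂ (Dual ℂ V) V
  have hbcan_eq : bcan = e.arrowCongr (e.arrowCongr (.refl ℂ ℂ)) (dualProd ℂ V) := by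
    refine LinearMap.ext₂ fun p q => ?_
    simp [hbcan, e, add_comm]
  have hbcan_symm : bcan.IsSymm := ⟨fun p q => by rw [hbcan, hbcan, add_comm]⟩
  have hbcan_sep : bcan.SeparatingLeft := hbcan_eq ▸ (separatingLeft_congr_iff e e).2
    ((separatingLeft_dualProd ℂ V).2 (eval_apply_injective ℂ))
  let Φ := ((LinearEquiv.prodComm ℂ V (Dual ℂ V)).trans (flat.symm.prodCongr flat)).toLinearMap
  have hbsum_eq : bsum = bcan.compLeft Φ := by
    refine LinearMap.ext₂ fun p q => ?_
    simp [hbsum, hbcan, Φ, hflat, hdual]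
  have hbsum_symm : bsum.IsSymm := ⟨fun p q => by rw [hbsum, hbsum, hsymm, hdual]⟩
  obtain ⟨P, hcont, hP0, hP1, hP⟩ := BilinForm.exists_path_to_compLeft_of_involutive hbcan_symm
    hbcan_sep (Φ := Φ) (fun p => by simp [Φ]) (hbsum_eq ▸ hbsum_symm)
  exact ⟨⟨hbcan_symm.eq, hbcan_sep⟩, P, hcont, hP0, hbsum_eq ▸ hP1,
    fun t => ⟨(hP t).1.eq, (hP t).2⟩⟩

/-- On `V ⊕ V*` the canonical hyperbolic bilinear form `b_can` is a
nondegenerate symmetric bilinear form and is connected to `b ⊕ b'` by a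
continuous path of nondegenerate symmetric bilinear forms. -/
theorem bcan_homotopic_to_b_oplus_bdual
    {V : Type*} [AddCommGroup V] [Module ℂ V] [FiniteDimensional ℂ V]
    (b : LinearMap.BilinForm ℂ V) (hsymm : ∀ x y, b x y = b y x)
    (hnd : ∀ x, (∀ y, b x y = 0) → x = 0)
    (flat : V ≃ₗ[ℂ] Module.Dual ℂ V) (hflat : ∀ x y, flat x y = b x y)
    (bcan bsum : LinearMap.BilinForm ℂ (V × Module.Dual ℂ V))
    (hbcan : ∀ p q : V × Module.Dual ℂ V, bcan p q = p.2 q.1 + q.2 p.1)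
    (hbsum : ∀ p q : V × Module.Dual ℂ V,
      bsum p q = b p.1 q.1 + p.2 (flat.symm q.2)) :
    ((∀ p q, bcan p q = bcan q p) ∧ (∀ p, (∀ q, bcan p q = 0) → p = 0)) ∧
    ∃ B : ℝ → LinearMap.BilinForm ℂ (V × Module.Dual ℂ V),
      (∀ p q, Continuous fun t => B t p q) ∧
      B 0 = bcan ∧ B 1 = bsum ∧
      ∀ t, (∀ p q, B t p q = B t q p) ∧ (∀ p, (∀ q, B t p q = 0) → p = 0) :=
  bcan_homotopic_to_b_oplus_bdual_general b hsymm flat hflat bcan bsum hbcan hbsum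
end

section
/- Let V be a finite-dimensional complex vector space and b a nondegenerate symmetric bilinear form on V. Then there exists a conjugate-linear map ν : V → V (additive with ν(c·x) = conj(c)·ν(x) for all c ∈ ℂ, x ∈ V) such that ν∘ν = id_V, b(νx, y) = conj(b(x, νy)) for all x, y ∈ V, and the sesquilinear form μ(x, y) := b(x, νy) is a positive-definite Hermitian inner product on V; in particular b(x, νx) is a positive real number for every x ≠ 0. -/
/-- Every nondegenerate symmetric bilinear form `b` on a finite-dimensional
complex vector space admits a conjugate-linear involution `ν` compatible with
`b` such that `μ(x,y) := b(x, νy)` is a positive-definite Hermitian inner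
product. -/
theorem exists_conjugation_making_b_hermitian
    {V : Type*} [AddCommGroup V] [Module ℂ V] [FiniteDimensional ℂ V]
    (b : LinearMap.BilinForm ℂ V) (hsymm : ∀ x y, b x y = b y x)
    (hnd : ∀ x, (∀ y, b x y = 0) → x = 0) :
    ∃ ν : V → V,
      (∀ x y, ν (x + y) = ν x + ν y) ∧
      (∀ (c : ℂ) (x : V), ν (c • x) = (starRingEnd ℂ) c • ν x) ∧
      (∀ x, ν (ν x) = x) ∧
      (∀ x y, b (ν x) y = (starRingEnd ℂ) (b x (ν y))) ∧
      (∀ x y, b y (ν x) = (starRingEnd ℂ) (b x (ν y))) ∧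
      (∀ x, x ≠ 0 → 0 < (b x (ν x)).re ∧ (b x (ν x)).im = 0) := by
  have hb : LinearMap.IsSymm b := ⟨fun x y => by simpa using hsymm x y⟩
  obtain ⟨v, hv⟩ := LinearMap.BilinForm.exists_orthogonal_basis hb
  have hnz : ∀ i, b (v i) (v i) ≠ 0 :=
    LinearMap.BilinForm.iIsOrtho.not_isOrtho_basis_self_of_nondegenerate hv
      ⟨hnd, fun y hy => hnd y (fun x => by rw [hsymm]; exact hy x)⟩
  -- scale each basis vector so that b (w i) (w i) = 1
  have hsq : ∀ i, ∃ c : ℂ, c ≠ 0 ∧ c * c = b (v i) (v i) := by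
    intro i
    obtain ⟨c, hc⟩ := IsAlgClosed.exists_pow_nat_eq (b (v i) (v i)) (n := 2) (by norm_num)
    refine ⟨c, ?_, by rw [← hc]; ring⟩
    rintro rfl
    exact hnz i (by rw [← hc]; ring)
  choose c hc0 hcsq using hsq
  have hcu : ∀ i, IsUnit ((c i)⁻¹) := fun i => (isUnit_iff_ne_zero.2 (hc0 i)).inv
  let w : Module.Basis (Fin (Module.finrank ℂ V)) ℂ V := v.isUnitSMul hcu
  have hw : ∀ i, w i = (c i)⁻¹ • v i := fun i => v.isUnitSMul_apply hcu i
  have hwd : ∀ i j, b (w i) (w j) = if i = j then 1 else 0 := by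
    intro i j
    by_cases h : i = j
    · subst h
      simp only [hw, map_smul, LinearMap.smul_apply, smul_eq_mul, if_pos rfl, ← hcsq i]
      field_simp
      exact div_self (hc0 i)
    · simp only [hw, map_smul, LinearMap.smul_apply, smul_eq_mul, if_neg h]
      rw [hv h]
      ring
  classical
  set ν : V → V := fun x => ∑ i, (starRingEnd ℂ) (w.repr x i) • w i with hν
  have hνx : ∀ x, ν x = ∑ i, (starRingEnd ℂ) (w.repr x i) • w i := fun x => rfl
  have hrepr : ∀ x i, w.repr (ν x) i = (starRingEnd ℂ) (w.repr x i) := by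
    intro x i
    rw [hνx]
    simp [Finsupp.single_apply, Finset.sum_ite_eq']
  have hbw : ∀ (x : V) j, b x (w j) = w.repr x j := by
    intro x j
    conv_lhs => rw [← w.sum_repr x]
    simp only [map_sum, LinearMap.coe_sum, Finset.sum_apply, map_smul,
      LinearMap.smul_apply, smul_eq_mul, hwd]
    simp [Finset.sum_ite_eq']
  have key : ∀ x y, b x (ν y) = ∑ i, w.repr x i * (starRingEnd ℂ) (w.repr y i) := by
    intro x y
    rw [hνx, map_sum]
    refine Finset.sum_congr rfl fun i _ => ?_
    rw [map_smul, smul_eq_mul, hbw, mul_comm]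
  have key2 : ∀ x y, b (ν x) y = ∑ i, (starRingEnd ℂ) (w.repr x i) * w.repr y i := by
    intro x y
    rw [hsymm, key]
    exact Finset.sum_congr rfl fun i _ => mul_comm _ _
  refine ⟨ν, ?_, ?_, ?_, ?_, ?_, ?_⟩
  · intro x y; rw [hνx, hνx, hνx]; simp [add_smul, Finset.sum_add_distrib]
  · intro a x; rw [hνx, hνx]; simp [smul_smul, Finset.smul_sum]
  · intro x
    conv_rhs => rw [← w.sum_repr x]
    rw [hνx]
    refine Finset.sum_congr rfl fun i _ => ?_
    rw [hrepr x i, Complex.conj_conj]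
  · intro x y
    rw [key2, key, map_sum]
    refine Finset.sum_congr rfl fun i _ => ?_
    rw [map_mul, Complex.conj_conj, mul_comm]
  · intro x y
    rw [hsymm, key2, key, map_sum]
    refine Finset.sum_congr rfl fun i _ => ?_
    rw [map_mul, Complex.conj_conj]
  · intro x hx
    rw [key]
    have hre : ∀ i, (w.repr x i * (starRingEnd ℂ) (w.repr x i))
        = ((Complex.normSq (w.repr x i) : ℝ) : ℂ) := fun i => Complex.mul_conj _
    rw [Finset.sum_congr rfl fun i _ => hre i, ← Complex.ofReal_sum]
    have hex : ∃ i, w.repr x i ≠ 0 := by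
      by_contra h
      push_neg at h
      apply hx
      have := w.sum_repr x
      rw [Finset.sum_congr rfl (fun i _ => by rw [h i, zero_smul])] at this
      simpa using this.symm
    obtain ⟨i₀, hi₀⟩ := hex
    refine ⟨?_, by simp⟩
    rw [Complex.ofReal_re]
    apply Finset.sum_pos' (fun i _ => Complex.normSq_nonneg _)
    exact ⟨i₀, Finset.mem_univ _, Complex.normSq_pos.2 hi₀⟩
end

section
/- Let V be a finite-dimensional complex normed vector space and let P : ℝ → End(V) be a family of linear endomorphisms that is differentiable at u ∈ ℝ and satisfies P(t)∘P(t) = P(t) for all t. Then the trace of P(u)∘P'(u) vanishes, where P'(u) denotes the derivative of P at u. -/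
/-- For a differentiable family of projections `P(t)² = P(t)` on a
finite-dimensional complex vector space, `tr(P(u) ∘ P'(u)) = 0`. -/
theorem trace_proj_comp_deriv_eq_zero
    {V : Type*} [NormedAddCommGroup V] [NormedSpace ℂ V] [FiniteDimensional ℂ V]
    (P : ℝ → (V →L[ℂ] V)) (u : ℝ) (P' : V →L[ℂ] V)
    (hP : HasDerivAt P P' u)
    (hproj : ∀ t, (P t).comp (P t) = P t) :
    LinearMap.trace ℂ V ((P u : V →ₗ[ℂ] V) ∘ₗ (P' : V →ₗ[ℂ] V)) = 0 := by
  let R : (V →L[ℂ] V) →L[ℝ] (V →L[ℝ] V) := ContinuousLinearMap.restrictScalarsL ℂ V V ℝ ℝ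
  have hPr : HasDerivAt (fun t => R (P t)) (R P') u := R.hasFDerivAt.comp_hasDerivAt u hP
  have h1 : HasDerivAt (fun t => (R (P t)).comp (R (P t)))
      ((R P').comp (R (P u)) + (R (P u)).comp (R P')) u := hPr.clm_comp hPr
  have h2 : HasDerivAt (fun t => (R (P t)).comp (R (P t))) (R P') u := by
    have : ∀ t, (R (P t)).comp (R (P t)) = R (P t) := by
      intro t
      ext x
      have := congrFun (congrArg DFunLike.coe (hproj t)) x
      simpa [R] using this
    simpa only [this] using hPr
  have keyR : (R P').comp (R (P u)) + (R (P u)).comp (R P') = R P' := h1.unique h2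
  have key : P'.comp (P u) + (P u).comp P' = P' := by
    ext x
    have := congrFun (congrArg DFunLike.coe keyR) x
    simpa [R] using this
  -- pass to linear maps, viewed in the endomorphism ring
  set Q : Module.End ℂ V := (P u : V →ₗ[ℂ] V)
  set D : Module.End ℂ V := (P' : V →ₗ[ℂ] V)
  have hQQ : Q * Q = Q := by
    have := congrArg ContinuousLinearMap.toLinearMap (hproj u)
    exact this
  have hkey : D * Q + Q * D = D := congrArg ContinuousLinearMap.toLinearMap key
  have hQDQ : Q * D * Q = 0 := by
    have h3 : Q * (D * Q + Q * D) * Q = Q * D * Q := by rw [hkey]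
    have h4 : Q * (D * Q + Q * D) * Q = Q * D * Q + Q * D * Q := by
      rw [mul_add, add_mul]
      simp only [mul_assoc]
      rw [hQQ, ← mul_assoc Q Q (D * Q), hQQ]
    have h5 := h4.symm.trans h3
    have : Q * D * Q + Q * D * Q - Q * D * Q = Q * D * Q - Q * D * Q := by rw [h5]
    simpa using this
  show LinearMap.trace ℂ V (Q * D) = 0
  calc LinearMap.trace ℂ V (Q * D) = LinearMap.trace ℂ V (Q * (Q * D)) := by
        rw [← mul_assoc, hQQ]
    _ = LinearMap.trace ℂ V (Q * D * Q) := by rw [LinearMap.trace_mul_comm]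
    _ = 0 := by rw [hQDQ]; simp
end
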